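/- Let 𝒜 be an alphabet and let a, b ∈ 𝒜⁺ be positive words such that b is a cyclic block interchange of a. Then cl_{F(𝒜)}(a + b⁻¹) ≤ 1. -/

import Mathlib

open scoped commutatorElement in
/-- The commutator length of `g`: the least `k` such that `g` is a product of
`k` commutators (and `0` if no such `k` exists, e.g. `cl` of the identity is `0`). -/
noncomputable def cl (G : Type*) [Group G] (g : G) : ℕ :=
  sInf {k | ∃ l : List (G × G), l.length = k ∧ (l.map fun p => ⁅p.1, p.2⁆).prod = g}

/-- The commutator length of a chain `g₁ + ⋯ + gₙ`, encoded as a list: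
the minimum of `cl` over all products of conjugates `t₁g₁t₁⁻¹ ⋯ tₙgₙtₙ⁻¹`. -/
noncomputable def clChain (G : Type*) [Group G] (c : List G) : ℕ :=
  sInf {m | ∃ t : List G, t.length = c.length ∧
    m = cl G (List.zipWith (fun a b => a * b * a⁻¹) t c).prod}

/-- Two positive words are related if they contain the same number of each letter. -/
def Related {A : Type*} [DecidableEq A] (v w : List A) : Prop :=
  ∀ a : A, v.count a = w.count a

/-- `w` is a cyclic block interchange of `v`. -/
def IsCBI {A : Type*} (v w : List A) : Prop :=
  ∃ v' w' : List A, List.IsRotated v' v ∧ List.IsRotated w' w ∧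
    ∃ w1 w2 w3 w4 : List A, v' = w1 ++ w2 ++ w3 ++ w4 ∧ w' = w1 ++ w4 ++ w3 ++ w2

open Classical in
/-- The cyclic block interchange distance between two related words. -/
noncomputable def dcbi {A : Type*} (v w : List A) : ℕ :=
  if List.IsRotated v w then 0
  else sInf {k | ∃ z : ℕ → List A, z 0 = v ∧ z k = w ∧ ∀ i < k, IsCBI (z i) (z (i + 1))}

/-- A positive word regarded as an element of the free group. -/
def toFree {A : Type*} (v : List A) : FreeGroup A := (v.map FreeGroup.of).prod

/-!
Rotating a word conjugates it in the free group, and the commutator length of a chain only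
depends on the conjugacy classes of its terms. Up to rotation, `a = x y z w` and `b = z y x w`
for some words `x, y, z, w`, and `x y z w (z y x w)⁻¹ = x y z x⁻¹ y⁻¹ z⁻¹ = ⁅x y, z y⁆`.
-/

theorem isConj_mul_comm {G : Type*} [Group G] (g h : G) : IsConj (g * h) (h * g) :=
  isConj_iff.mpr ⟨g⁻¹, by group⟩

theorem IsConj.inv {G : Type*} [Group G] {g h : G} (hgh : IsConj g h) : IsConj g⁻¹ h⁻¹ := by
  obtain ⟨c, rfl⟩ := isConj_iff.mp hgh
  exact isConj_iff.mpr ⟨c, by group⟩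

theorem List.IsRotated.isConj_prod {G : Type*} [Group G] {l l' : List G} (h : l ~r l') :
    IsConj l.prod l'.prod := by
  obtain ⟨n, rfl⟩ := h
  rw [List.rotate_eq_drop_append_take_mod, List.prod_append]
  conv_lhs => rw [← List.take_append_drop (n % l.length) l, List.prod_append]
  exact isConj_mul_comm _ _

open scoped commutatorElement in
theorem block_interchange_mul_inv_eq_commutatorElement {G : Type*} [Group G] (x y z w : G) :
    x * y * z * w * (z * y * x * w)⁻¹ = ⁅x * y, z * y⁆ := by
  rw [commutatorElement_def]
  group

open scoped commutatorElement in
theorem cl_commutatorElement_le_one {G : Type*} [Group G] (x y : G) : cl G ⁅x, y⁆ ≤ 1 :=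
  Nat.sInf_le ⟨[(x, y)], rfl, by simp⟩

theorem exists_conjugators_of_forall₂_isConj {G : Type*} [Group G] {c c' : List G}
    (h : List.Forall₂ IsConj c c') :
    ∃ t : List G, t.length = c.length ∧ List.zipWith (fun a b => a * b * a⁻¹) t c = c' := by
  induction h with
  | nil => exact ⟨[], rfl, rfl⟩
  | cons hab _ ih =>
    obtain ⟨u, hu⟩ := isConj_iff.mp hab
    obtain ⟨t, ht, htc⟩ := ih
    exact ⟨u :: t, by simp [ht], by simp [hu, htc]⟩

theorem clChain_le_cl_of_forall₂_isConj {G : Type*} [Group G] {c c' : List G}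
    (h : List.Forall₂ IsConj c c') : clChain G c ≤ cl G c'.prod := by
  obtain ⟨t, ht, htc⟩ := exists_conjugators_of_forall₂_isConj h
  exact Nat.sInf_le ⟨t, ht, by rw [htc]⟩

theorem toFree_append {A : Type*} (v w : List A) :
    toFree (v ++ w) = toFree v * toFree w := by
  simp [toFree]

theorem List.IsRotated.isConj_toFree {A : Type*} {v w : List A} (h : v ~r w) :
    IsConj (toFree v) (toFree w) :=
  (h.map FreeGroup.of).isConj_prod

theorem IsCBI.exists_isRotated {A : Type*} {a b : List A} (h : IsCBI a b) :
    ∃ x y z w : List A, a ~r x ++ y ++ z ++ w ∧ b ~r z ++ y ++ x ++ w := by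
  obtain ⟨v', w', hv, hw, w1, w2, w3, w4, rfl, rfl⟩ := h
  refine ⟨w2, w3, w4, w1, hv.symm.trans ?_, hw.symm.trans ?_⟩
  · simpa only [List.append_assoc] using List.isRotated_append (l := w1) (l' := w2 ++ w3 ++ w4)
  · simpa only [List.append_assoc] using List.isRotated_append (l := w1) (l' := w4 ++ w3 ++ w2)

/-- If `b` is a cyclic block interchange of `a`, then `cl_{F(𝒜)}(a + b⁻¹) ≤ 1`. -/
theorem cl_chain_cbi_le_one {A : Type*} (a b : List A) (h : IsCBI a b) :
    clChain (FreeGroup A) [toFree a, (toFree b)⁻¹] ≤ 1 := by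
  obtain ⟨x, y, z, w, ha, hb⟩ := h.exists_isRotated
  calc clChain (FreeGroup A) [toFree a, (toFree b)⁻¹]
      ≤ cl (FreeGroup A) (toFree (x ++ y ++ z ++ w) * (toFree (z ++ y ++ x ++ w))⁻¹) := by
        simpa using clChain_le_cl_of_forall₂_isConj
          (.cons ha.isConj_toFree (.cons hb.isConj_toFree.inv .nil))
    _ ≤ 1 := by
        simp only [toFree_append, block_interchange_mul_inv_eq_commutatorElement]
        exact cl_commutatorElement_le_one _ _
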